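/- Let u ∈ H^1(R^2) with ‖u‖_{L^2}^2‖∇u‖_{L^2}^2 ≤ (1-δ₁)² ‖Q‖_{L^2}^2‖∇Q‖_{L^2}^2 for some δ₁ ∈ (0,1), and assume the sharp Gagliardo-Nirenberg inequality ‖u‖_{L^6}^6 ≤ (3/(4‖Q‖_{L^2}^4))‖u‖_{L^2}^2‖∇u‖_{L^2}^4 together with ‖Q‖_{L^2}^2‖∇Q‖_{L^2}^2 = 2‖Q‖_{L^2}^4. Then there exists c_δ > 0 (depending only on δ₁) such that 8‖∇u‖_{L^2}^2 - (16/3)‖u‖_{L^6}^6 ≥ c_δ ‖∇u‖_{L^2}^2. -/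
import Mathlib


open MeasureTheory

noncomputable section

abbrev E2 := EuclideanSpace ℝ (Fin 2)

/-- Squared `L²` norm (mass). -/
def massQ (u : E2 → ℂ) : ℝ := ∫ x : E2, ‖u x‖ ^ 2

/-- Squared `L²` norm of the gradient. -/
def gradSq (u : E2 → ℂ) : ℝ := ∫ x : E2, ‖fderiv ℝ u x‖ ^ 2

/-- Sixth power of the `L⁶` norm. -/
def l6 (u : E2 → ℂ) : ℝ := ∫ x : E2, ‖u x‖ ^ 6

/-- Lower bound on the convexity of the variance (Lemma 3.1): for every
`δ₁ ∈ (0,1)` there is `c_δ > 0`, depending only on `δ₁`, such that for all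
`u, Q` satisfying `‖u‖²‖∇u‖² ≤ (1-δ₁)²‖Q‖²‖∇Q‖²`, the sharp Gagliardo–Nirenberg
inequality, and `‖Q‖²‖∇Q‖² = 2‖Q‖_{L²}⁴`, one has
`8‖∇u‖² - (16/3)‖u‖_{L⁶}⁶ ≥ c_δ ‖∇u‖²`. -/
theorem virial_lower_bound (δ₁ : ℝ) (h0 : 0 < δ₁) (h1 : δ₁ < 1) :
    ∃ c : ℝ, 0 < c ∧ ∀ u Q : E2 → ℂ,
      massQ u * gradSq u ≤ (1 - δ₁) ^ 2 * (massQ Q * gradSq Q) →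
      l6 u ≤ 3 / (4 * (massQ Q) ^ 2) * massQ u * (gradSq u) ^ 2 →
      massQ Q * gradSq Q = 2 * (massQ Q) ^ 2 →
      8 * gradSq u - (16 / 3) * l6 u ≥ c * gradSq u := by
  refine ⟨8 * (1 - (1 - δ₁) ^ 2), by nlinarith, fun u Q hmg hgn hQ => ?_⟩
  have hGu : 0 ≤ gradSq u := integral_nonneg fun x => by positivity
  have hMu : 0 ≤ massQ u := integral_nonneg fun x => by positivity
  have hL6 : 0 ≤ l6 u := integral_nonneg fun x => by positivity
  have hMQ : 0 ≤ massQ Q := integral_nonneg fun x => by positivity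
  rcases eq_or_lt_of_le hMQ with hMQ0 | hMQ0
  · -- massQ Q = 0 : then l6 u ≤ 0 since 3/0 = 0
    have : (3 : ℝ) / (4 * (massQ Q) ^ 2) = 0 := by
      rw [← hMQ0]; norm_num
    rw [this] at hgn
    simp at hgn
    have hl0 : l6 u = 0 := le_antisymm hgn hL6
    rw [hl0]
    nlinarith
  · -- massQ Q > 0
    rw [hQ] at hmg
    have key : l6 u ≤ 3 / (4 * (massQ Q) ^ 2) * ((1 - δ₁) ^ 2 * (2 * (massQ Q) ^ 2)) * gradSq u := by
      calc l6 u ≤ 3 / (4 * (massQ Q) ^ 2) * massQ u * (gradSq u) ^ 2 := hgn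
        _ = 3 / (4 * (massQ Q) ^ 2) * (massQ u * gradSq u) * gradSq u := by ring
        _ ≤ 3 / (4 * (massQ Q) ^ 2) * ((1 - δ₁) ^ 2 * (2 * (massQ Q) ^ 2)) * gradSq u := by
            apply mul_le_mul_of_nonneg_right _ hGu
            apply mul_le_mul_of_nonneg_left hmg (by positivity)
    have hsimp : (3 : ℝ) / (4 * (massQ Q) ^ 2) * ((1 - δ₁) ^ 2 * (2 * (massQ Q) ^ 2))
        = 3 / 2 * (1 - δ₁) ^ 2 := by
      field_simp
      ring
    rw [hsimp] at key
    nlinarith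

end
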